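/- Let a, b ∈ ℂ with 0 < |a| < |b|, set m₋ := 1 − conj(b)/conj(a) and m₊ := 1 + conj(b)/conj(a), let w ∈ ℂ satisfy w² = conj(b)/conj(a), and put ζ₀ := (i/2)(w − 1/w). Then ζ₀ ≠ −ζ₀, both ζ₀ and −ζ₀ lie in Ω := ℂ ∖ [−1,1], and {ζ ∈ Ω : m₋·f(ζ) + m₊·ζ = 0} = {ζ₀, −ζ₀}. -/

import Mathlib

/-!
With `v = i w` and `μ = w²`, `ζ₀ = (v + v⁻¹)/2` is the Joukowski image of a point outside the
unit disc. Hence `ζ₀` lies off the slit and `f(ζ₀) = (v - v⁻¹)/2`, which makes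
`(1 - μ) f(ζ₀) + (1 + μ) ζ₀ = v + μ/v = 0`. Conversely, squaring the equation and using
`f(ζ)² = ζ² - 1` gives `4μζ² = -(1 - μ)²`, which determines `ζ` up to sign.
-/

/-- The slit `[-1,1]`: complex numbers with zero imaginary part and real part in `[-1,1]`. -/
def slit : Set ℂ := {z : ℂ | z.im = 0 ∧ -1 ≤ z.re ∧ z.re ≤ 1}

/-- The cut plane `Ω = ℂ ∖ [-1,1]`. -/
def Omg : Set ℂ := slitᶜ

/-- The branch `f(ζ) = ζ·(1 − ζ⁻²)^{1/2}` of `(ζ² − 1)^{1/2}` with `f(ζ) ~ ζ` at infinity. -/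
noncomputable def fbr (ζ : ℂ) : ℂ := ζ * (1 - ζ⁻¹ ^ 2) ^ ((1 : ℂ) / 2)

noncomputable def joukowski (v : ℂ) : ℂ := (v + v⁻¹) / 2

lemma joukowski_neg (v : ℂ) : joukowski (-v) = -joukowski v := by
  unfold joukowski; rw [inv_neg]; ring

lemma fbr_neg (ζ : ℂ) : fbr (-ζ) = -fbr ζ := by
  unfold fbr; rw [inv_neg, neg_sq]; ring

lemma zero_mem_slit : (0 : ℂ) ∈ slit := by
  simp [slit]

lemma fbr_sq {ζ : ℂ} (hζ : ζ ≠ 0) : fbr ζ ^ 2 = ζ ^ 2 - 1 := by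
  unfold fbr
  rw [mul_pow, ← Complex.cpow_mul_nat, one_div, Nat.cast_ofNat, inv_mul_cancel₀ two_ne_zero,
    Complex.cpow_one]
  field_simp

/-- The preimages of a point `x ∈ [-1,1]` under the Joukowski map are the roots `x ± i√(1-x²)`
of `v² - 2xv + 1`, which lie on the unit circle. -/
lemma joukowski_mem_omg {v : ℂ} (hv : 1 < ‖v‖) : joukowski v ∈ Omg := by
  rintro ⟨him, hre₁, hre₂⟩
  have hv₀ : v ≠ 0 := norm_pos_iff.mp (by linarith)
  set x := (joukowski v).re
  set s := √(1 - x ^ 2)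
  have hs : s ^ 2 = 1 - x ^ 2 := Real.sq_sqrt (by nlinarith)
  have hx : joukowski v = x := Complex.ext rfl (by simpa using him)
  have hroots : (v - (x + s * Complex.I)) * (v - (x - s * Complex.I)) = 0 := by
    unfold joukowski at hx
    field_simp at hx
    have hs' : (s : ℂ) ^ 2 = 1 - x ^ 2 := by exact_mod_cast hs
    linear_combination hx + hs' - (s : ℂ) ^ 2 * Complex.I_sq
  have hnorm : ∀ t : ℝ, t ^ 2 = s ^ 2 → ‖(x : ℂ) + t * Complex.I‖ = 1 := fun t ht ↦ by
    rw [Complex.norm_add_mul_I, ht, hs]; simp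
  rcases mul_eq_zero.mp hroots with h | h
  · rw [sub_eq_zero.mp h, hnorm s rfl] at hv; exact lt_irrefl _ hv
  · rw [sub_eq_zero.mp h, sub_eq_add_neg, ← neg_mul, ← Complex.ofReal_neg,
      hnorm (-s) (neg_sq s)] at hv
    exact lt_irrefl _ hv

lemma re_sub_one_div_add_one_pos {u : ℂ} (hu : 1 < ‖u‖) : 0 < ((u - 1) / (u + 1)).re := by
  have hu₁ : u + 1 ≠ 0 := fun h ↦ by
    rw [eq_neg_of_add_eq_zero_left h, norm_neg, norm_one] at hu; exact lt_irrefl _ hu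
  have hnormSq : 1 < Complex.normSq u := by
    rw [Complex.normSq_eq_norm_sq]; nlinarith
  rw [Complex.div_re]
  have hre : (u - 1).re * (u + 1).re + (u - 1).im * (u + 1).im = Complex.normSq u - 1 := by
    simp only [Complex.sub_re, Complex.add_re, Complex.sub_im, Complex.add_im, Complex.one_re,
      Complex.one_im, Complex.normSq_apply]
    ring
  rw [← add_div, hre]
  exact div_pos (by linarith) (Complex.normSq_pos.mpr hu₁)

/-- Outside the unit disc the Joukowski map inverts the principal square root in `fbr`:
`1 - J(v)⁻² = c²` with `c = (v² - 1)/(v² + 1)` in the right half-plane. -/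
lemma fbr_joukowski {v : ℂ} (hv : 1 < ‖v‖) : fbr (joukowski v) = (v - v⁻¹) / 2 := by
  have hv₀ : v ≠ 0 := norm_pos_iff.mp (by linarith)
  have hv₂ : 1 < ‖v ^ 2‖ := by rw [norm_pow]; nlinarith
  have hJ : joukowski v ≠ 0 := fun h ↦ joukowski_mem_omg hv (h ▸ zero_mem_slit)
  have hv₂₁ : v ^ 2 + 1 ≠ 0 := fun h ↦ hJ (by unfold joukowski; field_simp; linear_combination h)
  have hc : 1 - (joukowski v)⁻¹ ^ 2 = ((v ^ 2 - 1) / (v ^ 2 + 1)) ^ 2 := by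
    unfold joukowski
    field_simp
    ring
  unfold fbr
  rw [hc, one_div, Complex.sq_cpow_two_inv (re_sub_one_div_add_one_pos hv₂)]
  unfold joukowski
  field_simp

lemma sq_eq_of_fbr_combination_eq_zero {μ ζ : ℂ} (hζ : ζ ≠ 0)
    (h : (1 - μ) * fbr ζ + (1 + μ) * ζ = 0) : 4 * μ * ζ ^ 2 = -(1 - μ) ^ 2 := by
  linear_combination ((1 + μ) * ζ - (1 - μ) * fbr ζ) * h + (1 - μ) ^ 2 * fbr_sq hζ

/-- When `0 < |a| < |b|`, the function `η(ζ) = m₋ f(ζ) + m₊ ζ` has exactly the two distinct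
zeros `±ζ₀`, `ζ₀ = (i/2)(w − 1/w)` with `w² = conj b / conj a`, in the cut plane `Ω`. -/
theorem stmt_7 (a b : ℂ) (ha : 0 < ‖a‖) (hab : ‖a‖ < ‖b‖)
    (w : ℂ) (hw : w ^ 2 = (starRingEnd ℂ) b / (starRingEnd ℂ) a)
    (ζ₀ : ℂ) (hζ₀ : ζ₀ = Complex.I / 2 * (w - 1 / w)) :
    ζ₀ ≠ -ζ₀ ∧ ζ₀ ∈ Omg ∧ -ζ₀ ∈ Omg ∧
    {ζ : ℂ | ζ ∈ Omg ∧
        (1 - (starRingEnd ℂ) b / (starRingEnd ℂ) a) * fbr ζ +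
          (1 + (starRingEnd ℂ) b / (starRingEnd ℂ) a) * ζ = 0} = {ζ₀, -ζ₀} := by
  rw [← hw]
  have hw₁ : 1 < ‖w‖ := by
    have : 1 < ‖w‖ ^ 2 := by
      rw [← norm_pow, hw, norm_div, Complex.norm_conj, Complex.norm_conj, one_lt_div ha]
      exact hab
    nlinarith [norm_nonneg w]
  have hw₀ : w ≠ 0 := norm_pos_iff.mp (by linarith)
  have hv : 1 < ‖Complex.I * w‖ := by simpa using hw₁
  have hζ₀J : ζ₀ = joukowski (Complex.I * w) := by
    rw [hζ₀, joukowski]; field_simp; ring_nf; simp only [Complex.I_sq]; ring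
  have hmem : ζ₀ ∈ Omg := hζ₀J ▸ joukowski_mem_omg hv
  have hmem_neg : -ζ₀ ∈ Omg := by
    rw [hζ₀J, ← joukowski_neg]; exact joukowski_mem_omg (by simpa using hv)
  have hne : ζ₀ ≠ 0 := fun h ↦ hmem (h ▸ zero_mem_slit)
  have hroot : (1 - w ^ 2) * fbr ζ₀ + (1 + w ^ 2) * ζ₀ = 0 := by
    rw [hζ₀J, fbr_joukowski hv, joukowski]; field_simp; ring_nf; simp only [Complex.I_sq]; ring
  have hsq : 4 * w ^ 2 * ζ₀ ^ 2 = -(1 - w ^ 2) ^ 2 :=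
    sq_eq_of_fbr_combination_eq_zero hne hroot
  refine ⟨fun h ↦ hne (by linear_combination h / 2), hmem, hmem_neg, ?_⟩
  ext ζ
  simp only [Set.mem_ofPred_eq, Set.mem_insert_iff, Set.mem_singleton_iff]
  constructor
  · rintro ⟨hΩ, hζ⟩
    have hζ0 : ζ ≠ 0 := fun h ↦ hΩ (h ▸ zero_mem_slit)
    rw [← sq_eq_sq_iff_eq_or_eq_neg]
    refine mul_left_cancel₀ (by simpa using hw₀ : 4 * w ^ 2 ≠ 0) ?_
    rw [sq_eq_of_fbr_combination_eq_zero hζ0 hζ, hsq]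
  · rintro (rfl | rfl)
    · exact ⟨hmem, hroot⟩
    · refine ⟨hmem_neg, ?_⟩
      rw [fbr_neg]; linear_combination -hroot
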